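/- arXiv:1704.03509 — 2 statements merged into one kernel-verified Lean document; each statement's English description precedes it below -/
import Mathlib

section
/- Alternative double sum expression for F3: for multiplicative characters A, A', B, B', C of F_q and x, y ∈ F_q, F3(A, A'; B, B'; C; x, y) = (1/(q-1)²)·Σ_{χ,λ} (Ā choose χ)·(Ā' choose λ)·(C·B̄·B̄' choose C·χ·λ)·(B̄·B̄'·χ̄·λ̄ choose B̄'·λ̄)·χ(x)·λ(y) + (B'(-1)/(q-1))·Σ_{χλ = B̄·B̄'} (Ā choose χ)·(Ā' choose λ)·χ(x)·λ(-y), where in the second sum χ, λ range over pairs of multiplicative characters with χλ = B̄·B̄'. -/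
set_option linter.unusedSectionVars false
set_option maxHeartbeats 1600000

open scoped BigOperators Classical

noncomputable section

variable {F : Type*} [Field F] [Fintype F]

instance : Fintype (MulChar F ℂ) := Fintype.ofFinite _

/-- Jacobi-type sum `J(χ,λ) = Σ_u χ(u) λ(1-u)`. -/
def Jsum (A B : MulChar F ℂ) : ℂ := ∑ u : F, A u * B (1 - u)

/-- Finite field binomial coefficient `(A choose B) = B(-1) J(A, B⁻¹)`. -/
def binom (A B : MulChar F ℂ) : ℂ := B (-1) * Jsum A B⁻¹

/-- Finite field Gauss hypergeometric `₂F₁(A,B;C|x)` (normalized as in the paper). -/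
def H2F1 (A B C : MulChar F ℂ) (x : F) : ℂ :=
  (1 : MulChar F ℂ) x * (B * C) (-1) *
    ∑ y : F, B y * (B⁻¹ * C) (1 - y) * A⁻¹ (1 - x * y)

/-- Finite field `₃F₂`. -/
def H3F2 (A0 A1 A2 B1 B2 : MulChar F ℂ) (x : F) : ℂ :=
  (1 / ((Fintype.card F : ℂ) - 1)) *
    ∑ χ : MulChar F ℂ, binom (A0 * χ) χ * binom (A1 * χ) (B1 * χ) *
      binom (A2 * χ) (B2 * χ) * χ x

/-- Finite field Appell series `F₃`. -/
def AF3 (A A' B B' C : MulChar F ℂ) (x y : F) : ℂ :=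
  (1 : MulChar F ℂ) (x * y) * B (-1) * B' (-1) *
    ∑ u : F, ∑ v : F, B u * B' v * (C * B⁻¹ * B'⁻¹) (1 - u - v) *
      A⁻¹ (1 - u * x) * A'⁻¹ (1 - v * y)

/-! ### Auxiliary lemmas -/

lemma chi_sq (χ : MulChar F ℂ) : χ (-1) * χ (-1) = 1 := by
  rw [← map_mul]; norm_num

lemma chi_inv_neg (χ : MulChar F ℂ) : χ⁻¹ (-1) = χ (-1) := by
  rw [MulChar.inv_apply']; norm_num

lemma card_sub_one_ne_zero : ((Fintype.card F : ℂ) - 1) ≠ 0 := by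
  have h2 : 2 ≤ Fintype.card F := Fintype.one_lt_card
  have : (Fintype.card F : ℂ) ≠ 1 := by
    have : Fintype.card F ≠ 1 := by omega
    exact_mod_cast this
  exact sub_ne_zero.mpr this

lemma Jsum_comm (A B : MulChar F ℂ) : Jsum A B = Jsum B A := by
  unfold Jsum
  refine Fintype.sum_equiv (Equiv.subLeft 1) _ _ fun u => ?_
  simp [Equiv.subLeft, mul_comm]

lemma Jsum_reflect (A B : MulChar F ℂ) : Jsum A B = B (-1) * Jsum (A * B)⁻¹ B := by
  unfold Jsum
  rw [Finset.mul_sum]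
  have h1 : ∑ u : F, A u⁻¹ * B (1 - u⁻¹) = ∑ u : F, A u * B (1 - u) :=
    Fintype.sum_equiv (Equiv.inv F) _ _ fun u => rfl
  rw [← h1]
  refine Finset.sum_congr rfl fun u _ => ?_
  by_cases hu : u = 0
  · simp [hu, MulChar.map_zero]
  · have h2 : (1 : F) - u⁻¹ = (-1) * (1 - u) * u⁻¹ := by field_simp; ring
    rw [h2, map_mul, map_mul, mul_inv, MulChar.mul_apply,
      MulChar.inv_apply' A u, MulChar.inv_apply' B u]
    ring_nf

lemma Jsum_reflect' (A B : MulChar F ℂ) : Jsum A B = A (-1) * Jsum A (A * B)⁻¹ := by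
  rw [Jsum_comm, Jsum_reflect B A, mul_comm B A, Jsum_comm]

lemma char_sum_eq (α : MulChar F ℂ) :
    ∑ u : F, α u = if α = 1 then ((Fintype.card F : ℂ) - 1) else 0 := by
  split_ifs with h
  · subst h
    rw [MulChar.sum_one_eq_card_units, Fintype.card_units]
    have := Fintype.card_pos (α := F)
    push_cast [Nat.cast_sub (by omega : 1 ≤ Fintype.card F)]
    ring
  · exact MulChar.sum_eq_zero_of_ne_one h

lemma sum_conv (α β : MulChar F ℂ) (s : F) :
    ∑ u : F, α u * β (s - u) =
      (α * β) s * Jsum α β +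
        (if s = 0 then β (-1) * (if α * β = 1 then ((Fintype.card F : ℂ) - 1) else 0) else 0) := by
  by_cases hs : s = 0
  · subst hs
    rw [if_pos rfl, MulChar.map_zero, zero_mul, zero_add, ← char_sum_eq (α * β),
      Finset.mul_sum]
    refine Finset.sum_congr rfl fun u _ => ?_
    have : (0 : F) - u = (-1) * u := by ring
    rw [this, map_mul, MulChar.mul_apply]
    ring
  · rw [if_neg hs, add_zero]
    have h1 : ∑ w : F, α (s * w) * β (s - s * w) = ∑ u : F, α u * β (s - u) :=
      Fintype.sum_equiv (Equiv.mulLeft₀ s hs) _ _ fun w => rfl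
    rw [← h1, MulChar.mul_apply, Jsum, Finset.mul_sum]
    refine Finset.sum_congr rfl fun w _ => ?_
    have h2 : s - s * w = s * (1 - w) := by ring
    rw [h2, map_mul, map_mul]
    ring

lemma conv_full (α β γ : MulChar F ℂ) :
    ∑ u : F, ∑ v : F, α u * β v * γ (1 - u - v) =
      Jsum α β * Jsum (α * β) γ +
        (if α * β = 1 then β (-1) * ((Fintype.card F : ℂ) - 1) else 0) := by
  have step1 : ∀ u : F, ∑ v : F, α u * β v * γ (1 - u - v)
      = ∑ s : F, α u * β (s - u) * γ (1 - s) := by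
    intro u
    refine Fintype.sum_equiv (Equiv.addLeft u) _ _ fun v => ?_
    simp only [Equiv.coe_addLeft, add_sub_cancel_left]
    rw [sub_sub]
  simp only [step1]
  rw [Finset.sum_comm]
  have step2 : ∀ s : F, ∑ u : F, α u * β (s - u) * γ (1 - s)
      = ((α * β) s * Jsum α β) * γ (1 - s)
        + (if s = 0 then β (-1) * (if α * β = 1 then ((Fintype.card F : ℂ) - 1) else 0) else 0)
            * γ (1 - s) := by
    intro s
    rw [← add_mul, ← sum_conv, Finset.sum_mul]
  simp only [step2]
  rw [Finset.sum_add_distrib]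
  congr 1
  · show _ = Jsum α β * ∑ s : F, (α * β) s * γ (1 - s)
    rw [Finset.mul_sum]
    refine Finset.sum_congr rfl fun s _ => ?_
    ring
  · rw [Finset.sum_eq_single 0]
    · simp [mul_ite]
    · intro b _ hb; rw [if_neg hb, zero_mul]
    · simp

lemma sum_mulChar_eq (a : F) :
    ∑ χ : MulChar F ℂ, χ a = if a = 1 then ((Fintype.card F : ℂ) - 1) else 0 := by
  haveI : NeZero (Monoid.exponent Fˣ) := ⟨Monoid.exponent_ne_zero_of_finite⟩
  split_ifs with h
  · subst h
    simp only [map_one, Finset.sum_const, Finset.card_univ, nsmul_eq_mul, mul_one]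
    have h1 : Nat.card (MulChar F ℂ) = Nat.card Fˣ :=
      MulChar.card_eq_card_units_of_hasEnoughRootsOfUnity F ℂ
    have h2 : Nat.card Fˣ = Fintype.card F - 1 := by
      rw [Nat.card_eq_fintype_card, Fintype.card_units]
    rw [← Nat.card_eq_fintype_card, h1, h2]
    have := Fintype.card_pos (α := F)
    push_cast [Nat.cast_sub (by omega : 1 ≤ Fintype.card F)]
    ring
  · obtain ⟨χ₀, hχ₀⟩ := MulChar.exists_apply_ne_one_of_hasEnoughRootsOfUnity F ℂ h
    refine eq_zero_of_mul_eq_self_left hχ₀ ?_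
    simp only [Finset.mul_sum, ← MulChar.mul_apply]
    exact Fintype.sum_bijective _ (Group.mulLeft_bijective χ₀) _ _ fun χ' ↦ rfl

lemma inv_expand (A : MulChar F ℂ) {z : F} (hz : z ≠ 0) :
    A⁻¹ (1 - z) =
      (1 / ((Fintype.card F : ℂ) - 1)) * ∑ χ : MulChar F ℂ, Jsum A⁻¹ χ⁻¹ * χ z := by
  have ht : ((Fintype.card F : ℂ) - 1) ≠ 0 := card_sub_one_ne_zero
  have key : ∑ χ : MulChar F ℂ, Jsum A⁻¹ χ⁻¹ * χ z
      = A⁻¹ (1 - z) * ((Fintype.card F : ℂ) - 1) := by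
    simp only [Jsum, Finset.sum_mul]
    rw [Finset.sum_comm]
    have inner : ∀ u : F, ∑ χ : MulChar F ℂ, A⁻¹ u * χ⁻¹ (1 - u) * χ z
        = A⁻¹ u * (if u = 1 - z then ((Fintype.card F : ℂ) - 1) else 0) := by
      intro u
      have e1 : ∀ χ : MulChar F ℂ, A⁻¹ u * χ⁻¹ (1 - u) * χ z
          = A⁻¹ u * χ ((1 - u)⁻¹ * z) := by
        intro χ
        rw [MulChar.inv_apply' χ, map_mul]
        ring
      simp only [e1]
      rw [← Finset.mul_sum, sum_mulChar_eq]
      congr 2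
      have : (1 - u)⁻¹ * z = 1 ↔ u = 1 - z := by
        constructor
        · intro h
          by_cases h1 : (1 : F) - u = 0
          · rw [h1, inv_zero, zero_mul] at h; exact absurd h.symm one_ne_zero
          · field_simp at h; rw [h]; ring
        · intro h
          subst h
          have : (1 : F) - (1 - z) = z := by ring
          rw [this, inv_mul_cancel₀ hz]
      simp [this]
    simp only [inner, mul_ite, mul_zero]
    rw [Finset.sum_ite_eq' Finset.univ (1 - z) (fun u => A⁻¹ u * ((Fintype.card F : ℂ) - 1))]
    simp
  rw [key]
  field_simp

lemma pointwise_expand (A B : MulChar F ℂ) {x : F} (hx : x ≠ 0) (u : F) :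
    B u * A⁻¹ (1 - u * x) =
      ∑ χ : MulChar F ℂ,
        (1 / ((Fintype.card F : ℂ) - 1)) * (Jsum A⁻¹ χ⁻¹ * χ x * (B * χ) u) := by
  by_cases hu : u = 0
  · simp [hu, MulChar.map_zero, MulChar.mul_apply]
  · have hz : u * x ≠ 0 := mul_ne_zero hu hx
    rw [inv_expand A hz, Finset.mul_sum, Finset.mul_sum]
    refine Finset.sum_congr rfl fun χ _ => ?_
    rw [map_mul, MulChar.mul_apply]
    ring

lemma binom_id2 (B B' C χ l : MulChar F ℂ) :
    binom (C * B⁻¹ * B'⁻¹) (C * χ * l) =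
      B (-1) * B' (-1) * χ (-1) * l (-1) *
        Jsum (B * χ * (B' * l)) (C * B⁻¹ * B'⁻¹) := by
  rw [binom, Jsum_reflect' (C * B⁻¹ * B'⁻¹) ((C * χ * l)⁻¹)]
  have hgrp : (C * B⁻¹ * B'⁻¹ * (C * χ * l)⁻¹)⁻¹ = B * χ * (B' * l) := by
    simp only [mul_inv, inv_inv]
    have : C⁻¹ * B * B' * (C * χ * l) = (C⁻¹ * C) * (B * χ * (B' * l)) := by ac_rfl
    rw [this, inv_mul_cancel, one_mul]
  rw [hgrp, Jsum_comm]
  simp only [MulChar.mul_apply, chi_inv_neg]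
  set J := Jsum (B * χ * (B' * l)) (C * B⁻¹ * B'⁻¹) with hJ
  linear_combination (B (-1) * B' (-1) * χ (-1) * l (-1) * J) * chi_sq C

lemma binom_id3 (α β : MulChar F ℂ) : binom (α⁻¹ * β⁻¹) β⁻¹ = Jsum α β := by
  rw [binom, inv_inv, chi_inv_neg]
  rw [Jsum_reflect' (α⁻¹ * β⁻¹) β]
  have h1 : (α⁻¹ * β⁻¹ * β)⁻¹ = α := by
    rw [mul_assoc, inv_mul_cancel, mul_one, inv_inv]
  rw [h1, Jsum_comm, Jsum_reflect' α (α⁻¹ * β⁻¹)]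
  have h2 : (α * (α⁻¹ * β⁻¹))⁻¹ = β := by
    rw [← mul_assoc, mul_inv_cancel, one_mul, inv_inv]
  rw [h2]
  simp only [MulChar.mul_apply, chi_inv_neg]
  set J := Jsum α β
  linear_combination (J * β (-1) * β (-1)) * chi_sq α + J * chi_sq β

lemma sum_swap4 (f : MulChar F ℂ → MulChar F ℂ → F → F → ℂ) :
    ∑ u : F, ∑ v : F, ∑ χ : MulChar F ℂ, ∑ l : MulChar F ℂ, f χ l u v
      = ∑ χ : MulChar F ℂ, ∑ l : MulChar F ℂ, ∑ u : F, ∑ v : F, f χ l u v :=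
  calc ∑ u : F, ∑ v : F, ∑ χ : MulChar F ℂ, ∑ l : MulChar F ℂ, f χ l u v
      = ∑ u : F, ∑ χ : MulChar F ℂ, ∑ v : F, ∑ l : MulChar F ℂ, f χ l u v :=
        Finset.sum_congr rfl fun u _ => Finset.sum_comm
    _ = ∑ χ : MulChar F ℂ, ∑ u : F, ∑ v : F, ∑ l : MulChar F ℂ, f χ l u v := Finset.sum_comm
    _ = ∑ χ : MulChar F ℂ, ∑ u : F, ∑ l : MulChar F ℂ, ∑ v : F, f χ l u v :=
        Finset.sum_congr rfl fun χ _ => Finset.sum_congr rfl fun u _ => Finset.sum_comm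
    _ = ∑ χ : MulChar F ℂ, ∑ l : MulChar F ℂ, ∑ u : F, ∑ v : F, f χ l u v :=
        Finset.sum_congr rfl fun χ _ => Finset.sum_comm

theorem AF3_char_sum' (A A' B B' C : MulChar F ℂ) (x y : F) :
    AF3 A A' B B' C x y =
      (1 / ((Fintype.card F : ℂ) - 1) ^ 2) * ∑ χ : MulChar F ℂ, ∑ fl : MulChar F ℂ,
        binom A⁻¹ χ * binom A'⁻¹ fl * binom (C * B⁻¹ * B'⁻¹) (C * χ * fl) *
          binom (B⁻¹ * B'⁻¹ * χ⁻¹ * fl⁻¹) (B'⁻¹ * fl⁻¹) * χ x * fl y +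
      (B' (-1) / ((Fintype.card F : ℂ) - 1)) * ∑ χ : MulChar F ℂ, ∑ fl : MulChar F ℂ,
        if χ * fl = B⁻¹ * B'⁻¹ then
          binom A⁻¹ χ * binom A'⁻¹ fl * χ x * fl (-y) else 0 := by
  by_cases hx : x = 0
  · subst hx
    simp [AF3, MulChar.map_zero]
  by_cases hy : y = 0
  · subst hy
    simp [AF3, MulChar.map_zero]
  -- main case
  have ht : ((Fintype.card F : ℂ) - 1) ≠ 0 := card_sub_one_ne_zero
  have hone : (1 : MulChar F ℂ) (x * y) = 1 :=
    MulChar.one_apply (isUnit_iff_ne_zero.mpr (mul_ne_zero hx hy))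
  have point : ∀ u v : F,
      B u * B' v * (C * B⁻¹ * B'⁻¹) (1 - u - v) * A⁻¹ (1 - u * x) * A'⁻¹ (1 - v * y)
      = ∑ χ : MulChar F ℂ, ∑ l : MulChar F ℂ,
          (1 / ((Fintype.card F : ℂ) - 1)) * (1 / ((Fintype.card F : ℂ) - 1)) *
            (Jsum A⁻¹ χ⁻¹ * χ x) * (Jsum A'⁻¹ l⁻¹ * l y) *
            ((B * χ) u * (B' * l) v * (C * B⁻¹ * B'⁻¹) (1 - u - v)) := by
    intro u v
    have e1 := pointwise_expand A B hx u
    have e2 := pointwise_expand A' B' hy v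
    calc B u * B' v * (C * B⁻¹ * B'⁻¹) (1 - u - v) * A⁻¹ (1 - u * x) * A'⁻¹ (1 - v * y)
        = (B u * A⁻¹ (1 - u * x)) *
            ((B' v * A'⁻¹ (1 - v * y)) * (C * B⁻¹ * B'⁻¹) (1 - u - v)) := by ring
      _ = (∑ χ : MulChar F ℂ,
            (1 / ((Fintype.card F : ℂ) - 1)) * (Jsum A⁻¹ χ⁻¹ * χ x * (B * χ) u)) *
          ((∑ l : MulChar F ℂ,
            (1 / ((Fintype.card F : ℂ) - 1)) * (Jsum A'⁻¹ l⁻¹ * l y * (B' * l) v)) *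
            (C * B⁻¹ * B'⁻¹) (1 - u - v)) := by rw [e1, e2]
      _ = _ := by
          rw [Finset.sum_mul]
          refine Finset.sum_congr rfl fun χ _ => ?_
          rw [Finset.sum_mul, Finset.mul_sum]
          refine Finset.sum_congr rfl fun l _ => ?_
          ring
  have claimA : (∑ u : F, ∑ v : F,
        B u * B' v * (C * B⁻¹ * B'⁻¹) (1 - u - v) * A⁻¹ (1 - u * x) * A'⁻¹ (1 - v * y))
      = ∑ χ : MulChar F ℂ, ∑ l : MulChar F ℂ,
          (1 / ((Fintype.card F : ℂ) - 1)) * (1 / ((Fintype.card F : ℂ) - 1)) *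
            (Jsum A⁻¹ χ⁻¹ * χ x) * (Jsum A'⁻¹ l⁻¹ * l y) *
            (Jsum (B * χ) (B' * l) * Jsum (B * χ * (B' * l)) (C * B⁻¹ * B'⁻¹) +
              (if B * χ * (B' * l) = 1 then (B' * l) (-1) * ((Fintype.card F : ℂ) - 1) else 0)) := by
    simp only [point]
    rw [sum_swap4]
    refine Finset.sum_congr rfl fun χ _ => Finset.sum_congr rfl fun l _ => ?_
    rw [← conv_full (B * χ) (B' * l) (C * B⁻¹ * B'⁻¹)]
    simp only [← Finset.mul_sum]
  show (1 : MulChar F ℂ) (x * y) * B (-1) * B' (-1) * _ = _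
  rw [hone, one_mul, claimA]
  have hpow : (1 : ℂ) / ((Fintype.card F : ℂ) - 1) ^ 2
      = (1 / ((Fintype.card F : ℂ) - 1)) * (1 / ((Fintype.card F : ℂ) - 1)) := by
    rw [sq, div_mul_div_comm, one_mul]
  rw [hpow]
  simp only [mul_add, Finset.mul_sum, Finset.sum_add_distrib]
  congr 1
  · refine Finset.sum_congr rfl fun χ _ => Finset.sum_congr rfl fun l _ => ?_
    rw [binom_id2 B B' C χ l]
    have harg1 : B⁻¹ * B'⁻¹ * χ⁻¹ * l⁻¹ = (B * χ)⁻¹ * (B' * l)⁻¹ := by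
      simp only [mul_inv]
      ac_rfl
    have harg2 : B'⁻¹ * l⁻¹ = (B' * l)⁻¹ := (mul_inv _ _).symm
    rw [harg1, harg2, binom_id3 (B * χ) (B' * l)]
    simp only [binom]
    set J1 := Jsum A⁻¹ χ⁻¹
    set J2 := Jsum A'⁻¹ l⁻¹
    set J3 := Jsum (B * χ) (B' * l)
    set J4 := Jsum (B * χ * (B' * l)) (C * B⁻¹ * B'⁻¹)
    set M := (1 / ((Fintype.card F : ℂ) - 1)) * (1 / ((Fintype.card F : ℂ) - 1)) *
      J1 * J2 * J3 * J4 * χ x * l y with hM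
    linear_combination (-(M * B (-1) * B' (-1) * l (-1) * l (-1))) * chi_sq χ +
      (-(M * B (-1) * B' (-1))) * chi_sq l
  · refine Finset.sum_congr rfl fun χ _ => Finset.sum_congr rfl fun l _ => ?_
    have hcond : (B * χ * (B' * l) = 1) ↔ (χ * l = B⁻¹ * B'⁻¹) := by
      constructor
      · intro h
        have h2 : (χ * l) * (B * B') = 1 := by
          calc (χ * l) * (B * B') = B * χ * (B' * l) := by ac_rfl
            _ = 1 := h
        rw [eq_comm, ← mul_inv]
        exact (eq_inv_of_mul_eq_one_left h2).symm ▸ rfl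
      · intro h
        have : B * χ * (B' * l) = (χ * l) * (B * B') := by ac_rfl
        rw [this, h, ← mul_inv, inv_mul_cancel]
    by_cases h : χ * l = B⁻¹ * B'⁻¹
    · rw [if_pos h, if_pos (hcond.mpr h)]
      have hsign : χ (-1) * l (-1) = B (-1) * B' (-1) := by
        have h5 := congrArg (fun η : MulChar F ℂ => η (-1)) h
        simpa [MulChar.mul_apply, chi_inv_neg] using h5
      have key : B (-1) * l (-1) = B' (-1) * χ (-1) := by
        linear_combination (-(B' (-1) * l (-1))) * hsign + (χ (-1) * B' (-1)) * chi_sq l -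
          (B (-1) * l (-1)) * chi_sq B'
      have hneg : l (-y) = l (-1) * l y := by rw [← map_mul, neg_one_mul]
      rw [hneg]
      simp only [binom, MulChar.mul_apply]
      set J1 := Jsum A⁻¹ χ⁻¹
      set J2 := Jsum A'⁻¹ l⁻¹
      field_simp
      set T := ((Fintype.card F : ℂ) - 1)
      set J1 := Jsum A⁻¹ χ⁻¹
      set J2 := Jsum A'⁻¹ l⁻¹
      linear_combination (J1 * J2 * χ x * l y * B' (-1) * B' (-1)) * key +
        (J1 * J2 * χ x * l y * B' (-1) * χ (-1)) * chi_sq B' -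
        (J1 * J2 * χ x * l y * B' (-1) * χ (-1)) * chi_sq l
    · rw [if_neg h, if_neg (fun hh => h (hcond.mp hh))]
      simp
end
end

section
/- Generating function in the second parameter of F3: for multiplicative characters A, A', B, B', C of F_q and y, t ∈ F_q \ {0, 1}, x ∈ F_q, (1/(q-1))·Σ_θ (A'θ choose θ)·F3(A, A'θ; B, B'; C; x, y)·θ(t) = Ā'(1-t)·F3(A, A'; B, B'; C; x, y/(1-t)) - Ā'(-t)·B'(-1)·C̄(y)·(B̄'·C)(1-y)·2F1(A, B; B̄'·C | -x(1-y)/y), where θ ranges over all multiplicative characters of F_q. -/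
open scoped BigOperators Classical

noncomputable section

variable {F : Type*} [Field F] [Fintype F]

lemma card_mulChar : (Fintype.card (MulChar F ℂ) : ℂ) = (Fintype.card F : ℂ) - 1 := by
  have h1 : NeZero ((Monoid.exponent Fˣ : ℕ) : ℂ) := by
    refine ⟨?_⟩
    have := Monoid.exponent_pos (G := Fˣ) |>.mpr (Monoid.ExponentExists.of_finite)
    exact_mod_cast Nat.cast_ne_zero.mpr this.ne'
  have := MulChar.card_eq_card_units_of_hasEnoughRootsOfUnity F ℂ
  rw [Nat.card_eq_fintype_card, Nat.card_eq_fintype_card] at this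
  rw [this, Fintype.card_units]
  have : 1 ≤ Fintype.card F := Fintype.card_pos
  push_cast [Nat.cast_sub this]
  ring

lemma sum_chars (a : F) :
    ∑ θ : MulChar F ℂ, θ a = if a = 1 then (Fintype.card F : ℂ) - 1 else 0 := by
  have h1 : NeZero ((Monoid.exponent Fˣ : ℕ) : ℂ) := by
    refine ⟨?_⟩
    have := Monoid.exponent_pos (G := Fˣ) |>.mpr (Monoid.ExponentExists.of_finite)
    exact_mod_cast Nat.cast_ne_zero.mpr this.ne'
  split_ifs with ha
  · subst ha
    simp only [MulChar.map_one]
    rw [Finset.sum_const, Finset.card_univ, nsmul_eq_mul, mul_one, card_mulChar]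
  · obtain ⟨χ, hχ⟩ := MulChar.exists_apply_ne_one_of_hasEnoughRootsOfUnity F ℂ ha
    refine eq_zero_of_mul_eq_self_left hχ ?_
    simp only [Finset.mul_sum, ← MulChar.mul_apply]
    exact Fintype.sum_bijective _ (Group.mulLeft_bijective χ) _ _ fun χ' ↦ rfl

lemma mul_inv_apply (θ : MulChar F ℂ) (a b : F) : θ a * θ⁻¹ b = θ (a / b) := by
  by_cases hb : b = 0
  · simp [hb, MulChar.inv_apply', MulChar.map_zero]
  · rw [MulChar.inv_apply', div_eq_mul_inv, map_mul]

lemma char_ne_zero (θ : MulChar F ℂ) {a : F} (ha : a ≠ 0) : θ a ≠ 0 := by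
  have h : θ a * θ⁻¹ a = 1 := by
    rw [mul_inv_apply, div_self ha, MulChar.map_one]
  intro h0; rw [h0, zero_mul] at h; exact zero_ne_one h

lemma char_mul_inv_self (θ : MulChar F ℂ) {a : F} (ha : a ≠ 0) : θ a * θ⁻¹ a = 1 := by
  rw [mul_inv_apply, div_self ha, MulChar.map_one]

lemma eps_apply (z : F) : (1 : MulChar F ℂ) z = if z = 0 then 0 else 1 := by
  split_ifs with h
  · simp [h, MulChar.map_zero]
  · exact MulChar.one_apply (isUnit_iff_ne_zero.mpr h)

lemma lemK (A' : MulChar F ℂ) {t : F} (ht0 : t ≠ 0) (c : F) :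
    ∑ θ : MulChar F ℂ, ∑ w : F,
      A' w * A'⁻¹ c * (θ (-1) * θ w * θ⁻¹ (1 - w) * θ⁻¹ c * θ t)
      = ((Fintype.card F : ℂ) - 1) * (if c = 0 then 0 else A'⁻¹ (c - t)) := by
  rw [Finset.sum_comm]
  have key : ∀ w : F, ∑ θ : MulChar F ℂ,
      A' w * A'⁻¹ c * (θ (-1) * θ w * θ⁻¹ (1 - w) * θ⁻¹ c * θ t)
      = A' w * A'⁻¹ c * (if (-1 * w * t) / ((1 - w) * c) = 1
          then (Fintype.card F : ℂ) - 1 else 0) := by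
    intro w
    rw [← Finset.mul_sum]
    congr 1
    rw [← sum_chars]
    refine Finset.sum_congr rfl fun θ _ ↦ ?_
    calc θ (-1) * θ w * θ⁻¹ (1 - w) * θ⁻¹ c * θ t
        = (θ (-1) * θ w * θ t) * (θ⁻¹ (1 - w) * θ⁻¹ c) := by ring
      _ = θ (-1 * w * t) * θ⁻¹ ((1 - w) * c) := by rw [map_mul, map_mul, map_mul]
      _ = θ ((-1 * w * t) / ((1 - w) * c)) := mul_inv_apply ..
  simp only [key]
  by_cases hc : c = 0
  · subst hc
    simp
  · rw [if_neg hc]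
    have hstep : ∀ w : F, A' w * A'⁻¹ c * (if (-1 * w * t) / ((1 - w) * c) = 1
          then (Fintype.card F : ℂ) - 1 else 0)
        = if w = c * (c - t)⁻¹ then ((Fintype.card F : ℂ) - 1) * A'⁻¹ (c - t) else 0 := by
      intro w
      by_cases hct : c = t
      · have hno : (-1 * w * t) / ((1 - w) * c) ≠ 1 := by
          intro h
          have hden : (1 - w) * c ≠ 0 := by
            intro h0; rw [h0, div_zero] at h; exact zero_ne_one h
          rw [div_eq_one_iff_eq hden] at h
          have : (0 : F) = c := by linear_combination h + (-w) * hct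
          exact hc this.symm
        rw [if_neg hno]
        have h0 : c - t = 0 := by rw [hct, sub_self]
        simp [h0, MulChar.inv_apply', MulChar.map_zero]
      · have hctne : c - t ≠ 0 := sub_ne_zero.mpr hct
        by_cases hw : w = c * (c - t)⁻¹
        · subst hw
          rw [if_pos rfl]
          have hden : (1 - c * (c - t)⁻¹) * c ≠ 0 := by
            have h1 : 1 - c * (c - t)⁻¹ = -t * (c - t)⁻¹ := by
              field_simp
              ring
            rw [h1]
            exact mul_ne_zero (mul_ne_zero (neg_ne_zero.mpr ht0) (inv_ne_zero hctne)) hc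
          have harg : (-1 * (c * (c - t)⁻¹) * t) / ((1 - c * (c - t)⁻¹) * c) = 1 := by
            rw [div_eq_one_iff_eq hden]
            linear_combination c * mul_inv_cancel₀ hctne
          rw [if_pos harg]
          have : A' (c * (c - t)⁻¹) * A'⁻¹ c = A'⁻¹ (c - t) := by
            rw [mul_inv_apply]
            rw [MulChar.inv_apply']
            congr 1
            field_simp
          rw [this]; ring
        · rw [if_neg hw]
          have hno : (-1 * w * t) / ((1 - w) * c) ≠ 1 := by
            intro h
            have hden : (1 - w) * c ≠ 0 := by
              intro h0; rw [h0, div_zero] at h; exact zero_ne_one h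
            rw [div_eq_one_iff_eq hden] at h
            apply hw
            have hwc : w * (c - t) = c := by linear_combination h
            rw [eq_comm, mul_inv_eq_iff_eq_mul₀ hctne]
            exact hwc.symm
          rw [if_neg hno, mul_zero]
    simp only [hstep]
    rw [Finset.sum_ite_eq' Finset.univ (c * (c - t)⁻¹)
      (fun _ ↦ ((Fintype.card F : ℂ) - 1) * A'⁻¹ (c - t))]
    simp


/-- auxiliary: the part of the `F₃` summand not involving `A'`. -/
def mterm (A B B' C : MulChar F ℂ) (x u v : F) : ℂ :=
  B u * B' v * (C * B⁻¹ * B'⁻¹) (1 - u - v) * A⁻¹ (1 - u * x)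

lemma AF3_eq (A A' B B' C : MulChar F ℂ) (x y : F) :
    AF3 A A' B B' C x y = (1 : MulChar F ℂ) (x * y) * B (-1) * B' (-1) *
      ∑ v : F, ∑ u : F, mterm A B B' C x u v * A'⁻¹ (1 - v * y) := by
  unfold AF3 mterm
  rw [Finset.sum_comm]

lemma step1 (A A' B B' C : MulChar F ℂ) (x y t : F) (θ : MulChar F ℂ) :
    binom (A' * θ) θ * AF3 A (A' * θ) B B' C x y * θ t
    = (1 : MulChar F ℂ) (x * y) * B (-1) * B' (-1) *
        ∑ v : F, (∑ u : F, mterm A B B' C x u v) *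
          (∑ w : F, A' w * A'⁻¹ (1 - v * y) *
            (θ (-1) * θ w * θ⁻¹ (1 - w) * θ⁻¹ (1 - v * y) * θ t)) := by
  rw [AF3_eq]
  unfold binom Jsum
  simp only [mul_inv, MulChar.mul_apply]
  simp only [Finset.mul_sum, Finset.sum_mul]
  refine Finset.sum_congr rfl fun v _ ↦ ?_
  conv_lhs => rw [Finset.sum_comm]
  refine Finset.sum_congr rfl fun u _ ↦ Finset.sum_congr rfl fun w _ ↦ by ring

lemma piece1 (A A' B B' C : MulChar F ℂ) (x y t : F) (hy0 : y ≠ 0) (ht1 : t ≠ 1) :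
    A'⁻¹ (1 - t) * AF3 A A' B B' C x (y / (1 - t))
    = (1 : MulChar F ℂ) (x * y) * B (-1) * B' (-1) *
        ∑ v : F, (∑ u : F, mterm A B B' C x u v) * A'⁻¹ (1 - v * y - t) := by
  have ht1' : (1 : F) - t ≠ 0 := sub_ne_zero.mpr (Ne.symm ht1)
  rw [AF3_eq]
  have hep : (1 : MulChar F ℂ) (x * (y / (1 - t))) = (1 : MulChar F ℂ) (x * y) := by
    rw [eps_apply, eps_apply]
    by_cases hx : x = 0
    · simp [hx]
    · rw [if_neg (mul_ne_zero hx (div_ne_zero hy0 ht1')), if_neg (mul_ne_zero hx hy0)]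
  rw [hep]
  simp only [Finset.mul_sum, Finset.sum_mul]
  refine Finset.sum_congr rfl fun v _ ↦ ?_
  refine Finset.sum_congr rfl fun u _ ↦ ?_
  have hcomb : A'⁻¹ (1 - t) * A'⁻¹ (1 - v * (y / (1 - t))) = A'⁻¹ (1 - v * y - t) := by
    rw [← map_mul]
    congr 1
    field_simp
    ring
  rw [← hcomb]
  ring

lemma piece2 (A A' B B' C : MulChar F ℂ) (x y t : F) (hy0 : y ≠ 0) (hy1 : y ≠ 1) :
    A'⁻¹ (-t) * B' (-1) * C⁻¹ y * (B'⁻¹ * C) (1 - y) *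
        H2F1 A B (B'⁻¹ * C) (-(x * (1 - y)) / y)
    = (1 : MulChar F ℂ) (x * y) * B (-1) * B' (-1) *
        ∑ v : F, (∑ u : F, mterm A B B' C x u v) *
          (if 1 - v * y = 0 then A'⁻¹ (-t) else 0) := by
  have h1y : (1 : F) - y ≠ 0 := sub_ne_zero.mpr (Ne.symm hy1)
  have hy1' : y - 1 ≠ 0 := sub_ne_zero.mpr hy1
  have hk : (y - 1) / y ≠ 0 := div_ne_zero hy1' hy0
  have hif : ∀ v : F, ((∑ u : F, mterm A B B' C x u v) *
        (if 1 - v * y = 0 then A'⁻¹ (-t) else 0))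
      = if v = y⁻¹ then (∑ u : F, mterm A B B' C x u y⁻¹) * A'⁻¹ (-t) else 0 := by
    intro v
    by_cases h : v = y⁻¹
    · subst h
      rw [if_pos rfl, if_pos (by rw [inv_mul_cancel₀ hy0, sub_self])]
    · rw [if_neg, if_neg h, mul_zero]
      intro h0
      exact h (eq_inv_of_mul_eq_one_left (by linear_combination -h0))
  have hcollapse : ∑ v : F, (∑ u : F, mterm A B B' C x u v) *
        (if 1 - v * y = 0 then A'⁻¹ (-t) else 0)
      = (∑ u : F, mterm A B B' C x u y⁻¹) * A'⁻¹ (-t) := by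
    rw [Finset.sum_congr rfl fun v _ ↦ hif v]
    rw [Finset.sum_ite_eq' Finset.univ (y⁻¹ : F)
      (fun _ ↦ (∑ u : F, mterm A B B' C x u y⁻¹) * A'⁻¹ (-t))]
    simp
  rw [hcollapse]
  have hsum : ∑ u : F, mterm A B B' C x u y⁻¹
      = ∑ s : F, mterm A B B' C x (s * ((y - 1) / y)) y⁻¹ :=
    (Fintype.sum_equiv (Equiv.mulRight₀ ((y - 1) / y) hk) _ _ fun s ↦ rfl).symm
  rw [hsum]
  have hep2 : (1 : MulChar F ℂ) (-(x * (1 - y)) / y) = (1 : MulChar F ℂ) (x * y) := by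
    rw [eps_apply, eps_apply]
    by_cases hx : x = 0
    · simp [hx]
    · rw [if_neg (div_ne_zero (neg_ne_zero.mpr (mul_ne_zero hx h1y)) hy0),
        if_neg (mul_ne_zero hx hy0)]
  have hDapp : ∀ a : F, (C * B⁻¹ * B'⁻¹ : MulChar F ℂ) a = C a * B a⁻¹ * B' a⁻¹ := by
    intro a; simp [MulChar.mul_apply, MulChar.inv_apply']
  have hBC : ∀ a : F, (B'⁻¹ * C : MulChar F ℂ) a = B' a⁻¹ * C a := by
    intro a; simp [MulChar.mul_apply, MulChar.inv_apply']
  have hBBC : ∀ a : F, (B * (B'⁻¹ * C) : MulChar F ℂ) a = B a * (B' a⁻¹ * C a) := by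
    intro a; simp [MulChar.mul_apply, MulChar.inv_apply']
  have hBiBC : ∀ a : F, (B⁻¹ * (B'⁻¹ * C) : MulChar F ℂ) a = B a⁻¹ * (B' a⁻¹ * C a) := by
    intro a; simp [MulChar.mul_apply, MulChar.inv_apply']
  have hneg : ((-1 : F))⁻¹ = -1 := by rw [inv_neg, inv_one]
  unfold H2F1 mterm
  simp only [hDapp, hBC, hBBC, hBiBC, MulChar.inv_apply' C, hep2, hneg]
  simp only [Finset.mul_sum, Finset.sum_mul]
  refine Finset.sum_congr rfl fun s _ ↦ ?_
  have hky : 1 - s * ((y - 1) / y) - y⁻¹ = ((y - 1) / y) * (1 - s) := by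
    field_simp
    ring
  have hax : 1 - s * ((y - 1) / y) * x = 1 - -(x * (1 - y)) / y * s := by
    field_simp
    ring
  rw [hky, hax]
  rw [show B (s * ((y - 1) / y)) = B s * B ((y - 1) / y) from map_mul ..]
  rw [show C ((y - 1) / y * (1 - s)) = C ((y - 1) / y) * C (1 - s) from map_mul ..]
  rw [show B (((y - 1) / y * (1 - s))⁻¹) = B (((y - 1) / y)⁻¹) * B ((1 - s)⁻¹) by
    rw [mul_inv, map_mul]]
  rw [show B' (((y - 1) / y * (1 - s))⁻¹) = B' (((y - 1) / y)⁻¹) * B' ((1 - s)⁻¹) by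
    rw [mul_inv, map_mul]]
  have r1 : B ((y - 1) / y) * B (((y - 1) / y)⁻¹) = 1 := by
    rw [← map_mul, mul_inv_cancel₀ hk, map_one]
  have r2 : B' (y⁻¹) * B' (((y - 1) / y)⁻¹) = B' (-1) * B' ((1 - y)⁻¹) := by
    rw [← map_mul, ← map_mul]
    congr 1
    field_simp
    ring
  have r3 : C ((y - 1) / y) = C (-1) * (C (1 - y) * C (y⁻¹)) := by
    rw [← map_mul, ← map_mul]
    congr 1
    field_simp
    ring
  set N : ℂ := (1 : MulChar F ℂ) (x * y) * B (-1) * B' (-1) * B s * C (1 - s) *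
      B ((1 - s)⁻¹) * B' ((1 - s)⁻¹) * A⁻¹ (1 - -(x * (1 - y)) / y * s) * A'⁻¹ (-t) with hN
  linear_combination (-N * (B' (y⁻¹) * B' (((y - 1) / y)⁻¹)) * C ((y - 1) / y)) * r1 +
    (-N * C ((y - 1) / y)) * r2 + (-N * (B' (-1) * B' ((1 - y)⁻¹))) * r3

theorem AF3_gen_second (A A' B B' C : MulChar F ℂ) (y t x : F)
    (hy0 : y ≠ 0) (hy1 : y ≠ 1) (ht0 : t ≠ 0) (ht1 : t ≠ 1) :
    (1 / ((Fintype.card F : ℂ) - 1)) * ∑ θ : MulChar F ℂ,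
        binom (A' * θ) θ * AF3 A (A' * θ) B B' C x y * θ t =
      A'⁻¹ (1 - t) * AF3 A A' B B' C x (y / (1 - t)) -
      A'⁻¹ (-t) * B' (-1) * C⁻¹ y * (B'⁻¹ * C) (1 - y) *
        H2F1 A B (B'⁻¹ * C) (-(x * (1 - y)) / y) := by
  have hq1 : ((Fintype.card F : ℂ) - 1) ≠ 0 := by
    intro h
    rw [sub_eq_zero] at h
    have h2 : 1 < Fintype.card F := Fintype.one_lt_card
    have h3 : Fintype.card F = 1 := by exact_mod_cast h
    omega
  have hstep : ∑ θ : MulChar F ℂ, binom (A' * θ) θ * AF3 A (A' * θ) B B' C x y * θ t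
      = (1 : MulChar F ℂ) (x * y) * B (-1) * B' (-1) *
          ∑ v : F, (∑ u : F, mterm A B B' C x u v) *
            (((Fintype.card F : ℂ) - 1) *
              (if 1 - v * y = 0 then 0 else A'⁻¹ (1 - v * y - t))) := by
    rw [Finset.sum_congr rfl fun θ _ ↦ step1 A A' B B' C x y t θ]
    rw [← Finset.mul_sum]
    congr 1
    rw [Finset.sum_comm]
    refine Finset.sum_congr rfl fun v _ ↦ ?_
    rw [← Finset.mul_sum]
    congr 1
    exact lemK A' ht0 (1 - v * y)
  rw [hstep]
  have hpull : ∑ v : F, (∑ u : F, mterm A B B' C x u v) *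
        (((Fintype.card F : ℂ) - 1) *
          (if 1 - v * y = 0 then 0 else A'⁻¹ (1 - v * y - t)))
      = ((Fintype.card F : ℂ) - 1) * ∑ v : F, (∑ u : F, mterm A B B' C x u v) *
          (if 1 - v * y = 0 then 0 else A'⁻¹ (1 - v * y - t)) := by
    rw [Finset.mul_sum]
    exact Finset.sum_congr rfl fun v _ ↦ by ring
  rw [hpull]
  have hfin : ∀ S : ℂ, (1 / ((Fintype.card F : ℂ) - 1)) *
      ((1 : MulChar F ℂ) (x * y) * B (-1) * B' (-1) * (((Fintype.card F : ℂ) - 1) * S))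
      = (1 : MulChar F ℂ) (x * y) * B (-1) * B' (-1) * S := by
    intro S
    field_simp
  rw [hfin]
  have hsplit : ∀ v : F, (∑ u : F, mterm A B B' C x u v) *
        (if 1 - v * y = 0 then 0 else A'⁻¹ (1 - v * y - t))
      = (∑ u : F, mterm A B B' C x u v) * A'⁻¹ (1 - v * y - t) -
        (∑ u : F, mterm A B B' C x u v) * (if 1 - v * y = 0 then A'⁻¹ (-t) else 0) := by
    intro v
    by_cases h : 1 - v * y = 0
    · rw [if_pos h, if_pos h, mul_zero]
      have h2 : 1 - v * y - t = -t := by rw [h, zero_sub]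
      rw [h2]
      ring
    · rw [if_neg h, if_neg h, mul_zero, sub_zero]
  rw [Finset.sum_congr rfl fun v _ ↦ hsplit v, Finset.sum_sub_distrib, mul_sub]
  rw [← piece1 A A' B B' C x y t hy0 ht1, ← piece2 A A' B B' C x y t hy0 hy1]
end
end
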